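/- arXiv:1503.05571 — 5 statements merged into one kernel-verified Lean document; each statement's English description precedes it below -/
import Mathlib

section
/- GSN stationarity of the data distribution: Under the hypotheses of the GSN distributional invariance result, additionally conclude that P(X_0 = x | H_0 = h) = g(x|h) for all h with P(H_0 = h) > 0, and that (X_t, H_t) has the same joint distribution as (X_0, H_0) for every t ≥ 0. In particular, the marginal distribution of X_t equals the distribution of X_0 for all t. -/
open Finset

/-- One step of the GSN Markov chain on joint laws of `(X, H)`:
`H' ~ f(·|H, X)` then `X' ~ g(·|H')`. -/
noncomputable def gsnStep {S H : Type*} [Fintype S] [Fintype H]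
    (f : H × S → H → ℝ) (g : H → S → ℝ) (μ : S × H → ℝ) : S × H → ℝ :=
  fun z => (∑ w : S × H, μ w * f (w.2, w.1) z.2) * g z.2 z.1

/-- Joint law of `(X_t, H_t)` for the GSN chain started at joint law `p0`. -/
noncomputable def gsnIter {S H : Type*} [Fintype S] [Fintype H]
    (f : H × S → H → ℝ) (g : H → S → ℝ) (p0 : S × H → ℝ) : ℕ → S × H → ℝ
  | 0 => p0
  | (t + 1) => gsnStep f g (gsnIter f g p0 t)

/-- GSN stationarity of the data distribution: under the hypotheses of the GSN
invariance theorem, we additionally get `P(X₀ = x | H₀ = h) = g(x|h)` for all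
`h` of positive probability, and `(X_t, H_t)` has the same joint distribution
as `(X₀, H₀)` for every `t ≥ 0`; in particular the marginal law of `X_t`
equals that of `X₀` for all `t`. -/
theorem gsn_stationarity
    {S H : Type*} [Fintype S] [Fintype H] [Nonempty S] [Nonempty H]
    (p0 : S × H → ℝ) (f : H × S → H → ℝ) (g : H → S → ℝ)
    (hp0nn : ∀ z, 0 ≤ p0 z) (hp0sum : ∑ z, p0 z = 1)
    (hfnn : ∀ w h, 0 ≤ f w h) (hfsum : ∀ w, ∑ h, f w h = 1)
    (hgnn : ∀ h x, 0 ≤ g h x) (hgsum : ∀ h, ∑ x, g h x = 1)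
    (hi : ∀ x h, 0 < (∑ h0, p0 (x, h0)) →
      p0 (x, h) = ∑ h0, p0 (x, h0) * f (h0, x) h)
    (hii : ∀ h x, 0 < (∑ x', ∑ h0, p0 (x', h0) * f (h0, x') h) →
      g h x * (∑ x', ∑ h0, p0 (x', h0) * f (h0, x') h) =
        ∑ h0, p0 (x, h0) * f (h0, x) h) :
    -- P(X₀ = x | H₀ = h) = g(x|h) for h with P(H₀ = h) > 0
    (∀ h, 0 < (∑ x, p0 (x, h)) →
      ∀ x, p0 (x, h) = g h x * (∑ x', p0 (x', h))) ∧
    -- (X_t, H_t) is equal in joint distribution to (X₀, H₀) for all t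
    (∀ t : ℕ, gsnIter f g p0 t = p0) ∧
    -- in particular the marginal law of X_t equals that of X₀
    (∀ t : ℕ, ∀ x, (∑ h, gsnIter f g p0 t (x, h)) = ∑ h, p0 (x, h)) := by
  -- hi holds unconditionally
  have hi' : ∀ x h, p0 (x, h) = ∑ h0, p0 (x, h0) * f (h0, x) h := by
    intro x h
    rcases lt_or_eq_of_le (Finset.sum_nonneg (fun h0 _ => hp0nn (x, h0)) :
        (0:ℝ) ≤ ∑ h0, p0 (x, h0)) with hpos | hzero
    · exact hi x h hpos
    · have hz : ∀ h0 : H, p0 (x, h0) = 0 := by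
        intro h0
        have := (Finset.sum_eq_zero_iff_of_nonneg
          (fun h0 _ => hp0nn (x, h0))).1 hzero.symm h0 (Finset.mem_univ _)
        exact this
      simp [hz]
  -- P(H_1 = h) = P(H_0 = h)
  have hq : ∀ h, (∑ x', ∑ h0, p0 (x', h0) * f (h0, x') h) = ∑ x', p0 (x', h) := by
    intro h
    exact Finset.sum_congr rfl (fun x _ => (hi' x h).symm)
  -- conditional: p0(x,h) = g h x * P(H0 = h) whenever the latter is 0 or not
  have key : ∀ h x, p0 (x, h) = g h x * (∑ x', p0 (x', h)) := by
    intro h x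
    rcases lt_or_eq_of_le (Finset.sum_nonneg (fun x' _ => hp0nn (x', h)) :
        (0:ℝ) ≤ ∑ x', p0 (x', h)) with hpos | hzero
    · have := hii h x (by rw [hq h]; exact hpos)
      rw [hq h] at this
      rw [this]; exact hi' x h
    · have hz : p0 (x, h) = 0 := by
        have := (Finset.sum_eq_zero_iff_of_nonneg
          (fun x' _ => hp0nn (x', h))).1 hzero.symm x (Finset.mem_univ _)
        exact this
      rw [hz, ← hzero, mul_zero]
  -- stationarity of one step
  have hstep : gsnStep f g p0 = p0 := by
    funext z
    obtain ⟨x, h⟩ := z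
    show (∑ w : S × H, p0 w * f (w.2, w.1) h) * g h x = p0 (x, h)
    have hsw : (∑ w : S × H, p0 w * f (w.2, w.1) h)
        = ∑ x' : S, ∑ h0 : H, p0 (x', h0) * f (h0, x') h := by
      rw [← Finset.sum_product']
      rfl
    rw [hsw, hq h, key h x, mul_comm]
  have hiter : ∀ t : ℕ, gsnIter f g p0 t = p0 := by
    intro t
    induction t with
    | zero => rfl
    | succ t ih => show gsnStep f g (gsnIter f g p0 t) = p0; rw [ih, hstep]
  exact ⟨fun h _ x => key h x, hiter, fun t x => by rw [hiter t]⟩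
end

section
/- If in the GSN setup P(H_0 = h) = P(H_1 = h) for all h and P(X_0 = x | H_0 = h) = g(x|h) for all h with positive probability, then the induced transition kernel on H satisfies P(H_2 = h | H_1 = h') = P(H_1 = h | H_0 = h') = Σ_x f(h|h', x) g(x|h') for all h' with positive probability; hence the sequence (H_t) is a time-homogeneous Markov chain with all H_t identically distributed. -/
open Finset

/-- If `P(H₀ = h) = P(H₁ = h)` for all `h`, and `P(X₀ = x | H₀ = h) = g(x|h)`
for all `h` of positive probability, then the induced transition kernel on `H`
is the same at every step, namely
`P(H_{t+1} = h | H_t = h') = ∑_x f(h|h',x) g(x|h')` (stated jointly, i.e. the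
joint law of `(H_t, H_{t+1})` equals `P(H_t = h') ∑_x g(x|h') f(h|h',x)`);
hence `(H_t)` is a time-homogeneous Markov chain whose marginals are all equal
to the law of `H₀`. -/
theorem gsn_hidden_chain_homogeneous
    {S H : Type*} [Fintype S] [Fintype H] [Nonempty S] [Nonempty H]
    (p0 : S × H → ℝ) (f : H × S → H → ℝ) (g : H → S → ℝ)
    (hp0nn : ∀ z, 0 ≤ p0 z) (hp0sum : ∑ z, p0 z = 1)
    (hfnn : ∀ w h, 0 ≤ f w h) (hfsum : ∀ w, ∑ h, f w h = 1)
    (hgnn : ∀ h x, 0 ≤ g h x) (hgsum : ∀ h, ∑ x, g h x = 1)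
    -- P(H₀ = h) = P(H₁ = h)
    (hmarg : ∀ h, (∑ x, p0 (x, h)) = ∑ x, ∑ h0, p0 (x, h0) * f (h0, x) h)
    -- P(X₀ = x | H₀ = h) = g(x|h) for h with P(H₀ = h) > 0
    (hcond : ∀ h, 0 < (∑ x, p0 (x, h)) →
      ∀ x, p0 (x, h) = g h x * (∑ x', p0 (x', h))) :
    -- all H_t are identically distributed
    (∀ t : ℕ, ∀ h, (∑ x, gsnIter f g p0 t (x, h)) = ∑ x, p0 (x, h)) ∧
    -- the transition kernel on H is the same at every step:
    -- the joint law of (H_t, H_{t+1}) factors through ∑_x g(x|h') f(h|h',x)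
    (∀ t : ℕ, ∀ h' h,
      (∑ x, gsnIter f g p0 t (x, h') * f (h', x) h) =
        (∑ x, gsnIter f g p0 t (x, h')) * (∑ x, g h' x * f (h', x) h)) := by
  classical
  set M : H → ℝ := fun h => ∑ x, p0 (x, h) with hM
  have hbase : ∀ h' h, (∑ x, p0 (x, h') * f (h', x) h)
      = M h' * ∑ x, g h' x * f (h', x) h := by
    intro h' h
    rcases lt_or_eq_of_le (Finset.sum_nonneg (fun x _ => hp0nn (x, h')) : (0:ℝ) ≤ M h') with
      hpos | hzero
    · rw [Finset.mul_sum]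
      refine Finset.sum_congr rfl fun x _ => ?_
      rw [hcond h' hpos x]; ring
    · have hz : ∀ x, p0 (x, h') = 0 := fun x =>
        (Finset.sum_eq_zero_iff_of_nonneg (fun x _ => hp0nn (x, h'))).mp hzero.symm x
          (Finset.mem_univ x)
      have hM0 : M h' = 0 := hzero.symm
      simp [hz, hM0]
  have key : ∀ t, (∀ h, (∑ x, gsnIter f g p0 t (x, h)) = M h) ∧
      (∀ h' h, (∑ x, gsnIter f g p0 t (x, h') * f (h', x) h)
        = M h' * ∑ x, g h' x * f (h', x) h) := by
    intro t
    induction t with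
    | zero => exact ⟨fun h => rfl, hbase⟩
    | succ t ih =>
      have hc : ∀ h, (∑ w : S × H, gsnIter f g p0 t w * f (w.2, w.1) h) = M h := by
        intro h
        rw [Fintype.sum_prod_type]
        calc ∑ x, ∑ h0, gsnIter f g p0 t (x, h0) * f (h0, x) h
            = ∑ h0, ∑ x, gsnIter f g p0 t (x, h0) * f (h0, x) h := Finset.sum_comm
          _ = ∑ h0, M h0 * ∑ x, g h0 x * f (h0, x) h :=
              Finset.sum_congr rfl fun h0 _ => ih.2 h0 h
          _ = ∑ h0, ∑ x, p0 (x, h0) * f (h0, x) h :=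
              Finset.sum_congr rfl fun h0 _ => (hbase h0 h).symm
          _ = M h := by
              show _ = ∑ x, p0 (x, h)
              rw [hmarg h]; exact Finset.sum_comm
      have hform : ∀ x h, gsnIter f g p0 (t + 1) (x, h) = M h * g h x := by
        intro x h
        show gsnStep f g (gsnIter f g p0 t) (x, h) = M h * g h x
        simp only [gsnStep]
        rw [hc h]
      have hmarg' : ∀ h, (∑ x, gsnIter f g p0 (t + 1) (x, h)) = M h := by
        intro h
        simp only [hform]
        rw [← Finset.mul_sum, hgsum h, mul_one]
      refine ⟨hmarg', fun h' h => ?_⟩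
      simp only [hform]
      rw [Finset.mul_sum]
      exact Finset.sum_congr rfl fun x _ => by ring
  refine ⟨fun t h => (key t).1 h, fun t h' h => ?_⟩
  rw [(key t).2 h' h, (key t).1 h']
end

section
/- Clamped Gibbs chain stationarity (sufficient condition): Let π be a joint probability mass function on finite S × H with everywhere-positive marginals, f(h|x) and g(x|h) its conditionals, and let 𝒮 ⊆ S be nonempty with π_S(𝒮) > 0. Define the clamped decoder g_𝒮(x|h) ∝ g(x|h)·1[x ∈ 𝒮] (defined whenever Σ_{x∈𝒮} g(x|h) > 0). Then the conditional distribution π_S(x | x ∈ 𝒮) = π_S(x)·1[x∈𝒮]/π_S(𝒮) is a stationary distribution of the Markov chain on 𝒮 with transition K_𝒮(x'|x) = Σ_h g_𝒮(x'|h) f(h|x). -/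
open Finset

/-- Clamped Gibbs chain stationarity (sufficient condition): for a joint pmf
`π` on `S × H` with everywhere-positive marginals, conditionals `f`, `g`, and a
nonempty clamping set `𝒮 ⊆ S`, the conditional distribution
`π_S(x | x ∈ 𝒮) = π_S(x) / π_S(𝒮)` (for `x ∈ 𝒮`) is stationary for the clamped
chain on `𝒮` with transition `K_𝒮(x'|x) = ∑_h g_𝒮(x'|h) f(h|x)`, where
`g_𝒮(x|h) ∝ g(x|h) 1[x ∈ 𝒮]`. -/
theorem clamped_gibbs_stationarity
    {S H : Type*} [Fintype S] [Fintype H] [Nonempty S] [Nonempty H]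
    [DecidableEq S]
    (π : S × H → ℝ) (hπnn : ∀ z, 0 ≤ π z) (hπsum : ∑ z, π z = 1)
    (πS : S → ℝ) (hπS : ∀ x, πS x = ∑ h, π (x, h)) (hπSpos : ∀ x, 0 < πS x)
    (πH : H → ℝ) (hπH : ∀ h, πH h = ∑ x, π (x, h)) (hπHpos : ∀ h, 0 < πH h)
    (f : S → H → ℝ) (hf : ∀ x h, f x h = π (x, h) / πS x)
    (g : H → S → ℝ) (hg : ∀ h x, g h x = π (x, h) / πH h)
    (𝒮 : Finset S) (h𝒮 : 𝒮.Nonempty)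
    (gS : H → S → ℝ)
    (hgS : ∀ h x, gS h x = (if x ∈ 𝒮 then g h x else 0) / ∑ x' ∈ 𝒮, g h x') :
    ∀ x' ∈ 𝒮,
      ∑ x ∈ 𝒮, (πS x / ∑ y ∈ 𝒮, πS y) * (∑ h, gS h x' * f x h) =
        πS x' / ∑ y ∈ 𝒮, πS y := by
  intro x' hx'
  set Z := ∑ y ∈ 𝒮, πS y with hZ
  -- key: for each h, gS h x' * ∑_{x ∈ 𝒮} π (x, h) = π (x', h)
  have key : ∀ h : H, gS h x' * ∑ x ∈ 𝒮, π (x, h) = π (x', h) := by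
    intro h
    have hsum : ∑ x ∈ 𝒮, π (x, h) = πH h * ∑ x ∈ 𝒮, g h x := by
      rw [Finset.mul_sum]
      refine Finset.sum_congr rfl fun x _ => ?_
      rw [hg, ← mul_div_assoc, mul_div_cancel_left₀ _ (hπHpos h).ne']
    by_cases hG : ∑ x ∈ 𝒮, g h x = 0
    · have hzero : ∀ x ∈ 𝒮, π (x, h) = 0 := by
        intro x hx
        have hnn : ∀ x ∈ 𝒮, 0 ≤ g h x := fun x _ => by
          rw [hg]; exact div_nonneg (hπnn _) (hπHpos h).le
        have := (Finset.sum_eq_zero_iff_of_nonneg hnn).1 hG x hx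
        rw [hg] at this
        have := (div_eq_zero_iff.1 this)
        rcases this with h1 | h1
        · exact h1
        · exact absurd h1 (hπHpos h).ne'
      have hs : ∑ x ∈ 𝒮, π (x, h) = 0 := Finset.sum_eq_zero hzero
      rw [hs, mul_zero, hzero x' hx']
    · rw [hgS, if_pos hx', hsum, hg, div_div,
        div_mul_cancel₀ _ (mul_ne_zero (hπHpos h).ne' hG)]
  have hZne : Z ≠ 0 := by
    have : 0 < Z := Finset.sum_pos (fun y _ => hπSpos y) h𝒮
    exact this.ne'
  calc ∑ x ∈ 𝒮, (πS x / Z) * (∑ h, gS h x' * f x h)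
      = ∑ x ∈ 𝒮, ∑ h, (gS h x' * π (x, h)) / Z := by
        refine Finset.sum_congr rfl fun x _ => ?_
        rw [Finset.mul_sum]
        refine Finset.sum_congr rfl fun h _ => ?_
        rw [hf]
        field_simp [hZne, (hπSpos x).ne']
    _ = ∑ h, (gS h x' * ∑ x ∈ 𝒮, π (x, h)) / Z := by
        rw [Finset.sum_comm]
        refine Finset.sum_congr rfl fun h _ => ?_
        rw [Finset.mul_sum, Finset.sum_div]
    _ = ∑ h, π (x', h) / Z := by
        refine Finset.sum_congr rfl fun h _ => ?_
        rw [key]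
    _ = πS x' / Z := by rw [← Finset.sum_div, ← hπS]
end

section
/- General sufficient condition for clamping: Let f : S → PMF(H) and g : H → PMF(S) be kernels such that the alternating chain X → H → X on S × H is ergodic with unique stationary distribution π(x,h), and suppose g(x|h) = π(x|h) for all h with π_H(h) > 0. Let 𝒮 ⊆ S with π_S(𝒮) > 0 and define the clamped chain using f and g_𝒮(x|h) ∝ g(x|h)1[x∈𝒮]. If Σ_{x∈𝒮} π(x | x ∈ 𝒮) f(h'|x) = π(h' | x ∈ 𝒮) for all h', then π_S(· | · ∈ 𝒮) is a stationary distribution of the clamped chain restricted to 𝒮. -/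
open Finset

/-- General sufficient condition for clamping: let `f : S → PMF(H)` and
`g : H → PMF(S)` be kernels whose alternating chain is ergodic with unique
stationary joint `π`, with `g(x|h) = π(x|h)` wherever `π_H(h) > 0`. Let
`𝒮 ⊆ S` be nonempty (so `π_S(𝒮) > 0` since `π_S > 0`), and define the clamped
decoder `g_𝒮(x|h) ∝ g(x|h) 1[x ∈ 𝒮]`. If
`∑_{x∈𝒮} π(x | x∈𝒮) f(h'|x) = π(h' | x∈𝒮)` for all `h'`, then
`π_S(· | · ∈ 𝒮)` is stationary for the clamped chain restricted to `𝒮`. -/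
theorem clamping_sufficient_condition
    {S H : Type*} [Fintype S] [Fintype H] [Nonempty S] [Nonempty H]
    [DecidableEq S]
    (f : S → H → ℝ) (g : H → S → ℝ)
    (hfnn : ∀ x h, 0 ≤ f x h) (hfsum : ∀ x, ∑ h, f x h = 1)
    (hgnn : ∀ h x, 0 ≤ g h x) (hgsum : ∀ h, ∑ x, g h x = 1)
    (π : S × H → ℝ) (hπnn : ∀ z, 0 ≤ π z) (hπsum : ∑ z, π z = 1)
    -- π is a stationary joint of the alternating chain X → H → X
    (hπstat : ∀ x' h', (∑ x, ∑ h, π (x, h) * f x h' * g h' x') = π (x', h'))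
    -- ergodicity: π is the unique such stationary joint
    (hπuniq : ∀ ρ : S × H → ℝ, (∀ z, 0 ≤ ρ z) → (∑ z, ρ z = 1) →
      (∀ x' h', (∑ x, ∑ h, ρ (x, h) * f x h' * g h' x') = ρ (x', h')) → ρ = π)
    (πS : S → ℝ) (hπS : ∀ x, πS x = ∑ h, π (x, h)) (hπSpos : ∀ x, 0 < πS x)
    (πH : H → ℝ) (hπH : ∀ h, πH h = ∑ x, π (x, h))
    -- g is the conditional π(x|h) wherever π_H(h) > 0
    (hg : ∀ h, 0 < πH h → ∀ x, g h x * πH h = π (x, h))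
    (𝒮 : Finset S) (h𝒮 : 𝒮.Nonempty)
    (gS : H → S → ℝ)
    (hgS : ∀ h x, gS h x = (if x ∈ 𝒮 then g h x else 0) / ∑ x' ∈ 𝒮, g h x')
    -- the clamping condition: ∑_{x∈𝒮} π(x|x∈𝒮) f(h'|x) = π(h'|x∈𝒮)
    (hcond : ∀ h', (∑ x ∈ 𝒮, (πS x / ∑ y ∈ 𝒮, πS y) * f x h') =
      (∑ x ∈ 𝒮, π (x, h')) / ∑ y ∈ 𝒮, πS y) :
    ∀ x' ∈ 𝒮,
      ∑ x ∈ 𝒮, (πS x / ∑ y ∈ 𝒮, πS y) * (∑ h', gS h' x' * f x h') =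
        πS x' / ∑ y ∈ 𝒮, πS y := by
  intro x' hx'
  have key : ∀ h', gS h' x' * (∑ x ∈ 𝒮, π (x, h')) = π (x', h') := by
    intro h'
    by_cases hH : 0 < πH h'
    · have hgh := hg h' hH
      have hD : ∑ x ∈ 𝒮, π (x, h') = (∑ x ∈ 𝒮, g h' x) * πH h' := by
        rw [sum_mul]; exact sum_congr rfl fun x _ => (hgh x).symm
      by_cases hDpos : 0 < ∑ x ∈ 𝒮, g h' x
      · rw [hgS, if_pos hx', hD, ← hgh x']
        field_simp
      · have hD0 : ∑ x ∈ 𝒮, g h' x = 0 :=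
          le_antisymm (not_lt.mp hDpos) (sum_nonneg fun x _ => hgnn _ _)
        have hgx' : g h' x' = 0 :=
          (sum_eq_zero_iff_of_nonneg fun x _ => hgnn h' x).mp hD0 x' hx'
        rw [← hgh x', hgx', zero_mul, hD, hD0, zero_mul, mul_zero]
    · have hH0 : πH h' = 0 :=
        le_antisymm (not_lt.mp hH) (by rw [hπH]; exact sum_nonneg fun x _ => hπnn _)
      have hzero : ∀ x, π (x, h') = 0 := by
        intro x
        have h0 : ∑ x, π (x, h') = 0 := by rw [← hπH]; exact hH0
        exact (sum_eq_zero_iff_of_nonneg (fun x _ => hπnn (x, h'))).mp h0 x (mem_univ x)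
      rw [hzero, sum_eq_zero (fun x _ => hzero x), mul_zero]
  calc ∑ x ∈ 𝒮, (πS x / ∑ y ∈ 𝒮, πS y) * (∑ h', gS h' x' * f x h')
      = ∑ h', gS h' x' * ∑ x ∈ 𝒮, (πS x / ∑ y ∈ 𝒮, πS y) * f x h' := by
        simp_rw [mul_sum]
        rw [sum_comm]
        exact sum_congr rfl fun h' _ => sum_congr rfl fun x _ => by ring
    _ = ∑ h', gS h' x' * ((∑ x ∈ 𝒮, π (x, h')) / ∑ y ∈ 𝒮, πS y) := by
        exact sum_congr rfl fun h' _ => by rw [hcond]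
    _ = (∑ h', π (x', h')) / ∑ y ∈ 𝒮, πS y := by
        rw [sum_div]
        exact sum_congr rfl fun h' _ => by rw [← key h', mul_div_assoc]
    _ = πS x' / ∑ y ∈ 𝒮, πS y := by rw [hπS]
end

section
/- Necessity of the clamping condition under linear independence: In the finite setting of the clamping result, suppose the clamped chain with kernels f(h|x) and g_𝒮(x|h) is ergodic with unique stationary X-marginal equal to π(x | x ∈ 𝒮), and suppose the family of vectors {(g_𝒮(x|h))_{x∈𝒮} : h ∈ H} is linearly independent in ℝ^𝒮. Then necessarily Σ_{x∈𝒮} π(x | x ∈ 𝒮) f(h'|x) = π(h' | x ∈ 𝒮) for all h' ∈ H. -/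
open Finset

/-- Necessity of the clamping condition under linear independence: if the
clamped chain (encoder `f`, clamped decoder `g_𝒮(x|h) = π(x|h, x∈𝒮)`) is
ergodic with unique stationary `X`-marginal equal to `π(x | x ∈ 𝒮)`, and the
family of vectors `{(g_𝒮(x|h))_{x∈𝒮} : h ∈ H}` is linearly independent in
`ℝ^𝒮`, then `∑_{x∈𝒮} π(x | x∈𝒮) f(h'|x) = π(h' | x∈𝒮)` for all `h'`. -/
theorem clamping_condition_necessary
    {S H : Type*} [Fintype S] [Fintype H] [Nonempty S] [Nonempty H]
    [DecidableEq S]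
    (π : S × H → ℝ) (hπnn : ∀ z, 0 ≤ π z) (hπsum : ∑ z, π z = 1)
    (πS : S → ℝ) (hπS : ∀ x, πS x = ∑ h, π (x, h))
    (𝒮 : Finset S) (h𝒮 : 𝒮.Nonempty) (h𝒮pos : 0 < ∑ y ∈ 𝒮, πS y)
    (f : S → H → ℝ) (hfnn : ∀ x h, 0 ≤ f x h) (hfsum : ∀ x, ∑ h, f x h = 1)
    -- clamped decoder: g_𝒮(x|h) = π(x | h, x ∈ 𝒮)
    (gS : H → S → ℝ)
    (hgS : ∀ h x, gS h x = (if x ∈ 𝒮 then π (x, h) else 0) / ∑ x' ∈ 𝒮, π (x', h))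
    -- π(· | · ∈ 𝒮) is a stationary distribution of the clamped chain
    (hstat : ∀ x' ∈ 𝒮,
      ∑ x ∈ 𝒮, (πS x / ∑ y ∈ 𝒮, πS y) * (∑ h', gS h' x' * f x h') =
        πS x' / ∑ y ∈ 𝒮, πS y)
    -- ergodicity: it is the unique stationary distribution on 𝒮
    (huniq : ∀ ρ : S → ℝ, (∀ x, 0 ≤ ρ x) → (∀ x, x ∉ 𝒮 → ρ x = 0) →
      (∑ x ∈ 𝒮, ρ x = 1) →
      (∀ x' ∈ 𝒮, ∑ x ∈ 𝒮, ρ x * (∑ h', gS h' x' * f x h') = ρ x') →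
      ∀ x ∈ 𝒮, ρ x = πS x / ∑ y ∈ 𝒮, πS y)
    -- linear independence of the clamped decoder vectors
    (hLI : LinearIndependent ℝ (fun h : H => fun x : {x // x ∈ 𝒮} => gS h x.1)) :
    ∀ h' : H,
      ∑ x ∈ 𝒮, (πS x / ∑ y ∈ 𝒮, πS y) * f x h' =
        (∑ x ∈ 𝒮, π (x, h')) / ∑ y ∈ 𝒮, πS y := by
  set Z := ∑ y ∈ 𝒮, πS y with hZ
  set c : H → ℝ := fun h' => ∑ x ∈ 𝒮, (πS x / Z) * f x h' with hc
  set d : H → ℝ := fun h' => (∑ x ∈ 𝒮, π (x, h')) / Z with hd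
  -- Step A: stationarity, with the two sums swapped
  have stepA : ∀ x' ∈ 𝒮, ∑ h', c h' * gS h' x' = πS x' / Z := by
    intro x' hx'
    have hst := hstat x' hx'
    calc ∑ h', c h' * gS h' x'
        = ∑ h', ∑ x ∈ 𝒮, ((πS x / Z) * f x h') * gS h' x' := by
          simp [hc, Finset.sum_mul]
      _ = ∑ x ∈ 𝒮, ∑ h', ((πS x / Z) * f x h') * gS h' x' := Finset.sum_comm
      _ = ∑ x ∈ 𝒮, (πS x / Z) * (∑ h', gS h' x' * f x h') := by
          refine Finset.sum_congr rfl fun x _ => ?_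
          rw [Finset.mul_sum]
          exact Finset.sum_congr rfl fun h' _ => by ring
      _ = πS x' / Z := hst
  -- Step B: the true conditional also satisfies the same equations
  have stepB : ∀ x' ∈ 𝒮, ∑ h', d h' * gS h' x' = πS x' / Z := by
    intro x' hx'
    have key : ∀ h' : H, d h' * gS h' x' = π (x', h') / Z := by
      intro h'
      have hgs := hgS h' x'
      rw [if_pos hx'] at hgs
      by_cases hN : (∑ x ∈ 𝒮, π (x, h')) = 0
      · have hz : π (x', h') = 0 := by
          have := Finset.sum_eq_zero_iff_of_nonneg
            (fun x _ => hπnn (x, h')) |>.mp hN x' hx'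
          exact this
        simp [hd, hN, hgs, hz]
      · rw [hd, hgs]
        field_simp
    rw [Finset.sum_congr rfl (fun h' _ => key h')]
    rw [← Finset.sum_div, ← hπS]
  -- difference of coefficients kills the linearly independent family
  have hzero : ∀ h' : H, c h' - d h' = 0 := by
    have := Fintype.linearIndependent_iff.mp hLI (fun h' => c h' - d h')
    refine this ?_
    funext x
    obtain ⟨x', hx'⟩ := x
    simp only [Finset.sum_apply, Pi.smul_apply, smul_eq_mul, Pi.zero_apply]
    have : ∑ h' : H, (c h' - d h') * gS h' x' = 0 := by
      simp only [sub_mul, Finset.sum_sub_distrib]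
      rw [stepA x' hx', stepB x' hx', sub_self]
    simpa using this
  intro h'
  have := hzero h'
  simp only [hc, hd] at this
  linarith
end
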